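/- Let x₀, x₁ ∈ ℝ and let y₀, y₁ ≥ 0 be not both zero. Suppose |x₁ − x₀| > (1/2)·[π·(y₁² + y₀²) + 4y₁y₀]. Then the Legendre–Fenchel transform satisfies Λ*(x₀, y₀, x₁, y₁) = π·(|x₁ − x₀| − 2y₁y₀). -/

import Mathlib

/-!
For `0 < |δ| < π`, `x₁δ + y₁γ − Λ(δ,γ)` is a concave quadratic in `γ`; completing the square leaves
`(x₁ − x₀)δ + δ(c cos(δ/2) − d)/sin(δ/2)` with `c = y₁² + y₀²`, `d = 2y₁y₀`, whose second term is
even in `δ`. Jordan's inequality `t ≤ π sin(t/2)` and `2 cos(t/2) ≤ π − t` bound this by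
`π(|x₁ − x₀| − d)` as soon as `|x₁ − x₀| ≥ πc/2 + d`, a bound that also dominates the value
`2(y₁ − y₀)²` at `δ = 0`. It is the limit as `δ → ±π` with the sign of `x₁ − x₀`, hence the supremum,
although it is not attained.
-/

/-- The limiting cumulant generating function `Λ` for the Grushin model with
initial point `(x₀, y₀)`: for `0 < |δ| < π`,
`Λ(δ,γ) = [(4δ²y₀² + γ²)·sin(δ/2) + 4x₀δ²·cos(δ/2) + 4y₀γδ] / (4δ·cos(δ/2))`;
`Λ(0,γ) = γ²/8 + y₀γ`; and `Λ(δ,γ) = +∞` for `|δ| ≥ π`. -/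
noncomputable def Lam (x0 y0 : ℝ) (δ γ : ℝ) : EReal :=
  if |δ| < Real.pi then
    if δ = 0 then ((γ ^ 2 / 8 + y0 * γ : ℝ) : EReal)
    else ((((4 * δ ^ 2 * y0 ^ 2 + γ ^ 2) * Real.sin (δ / 2) + 4 * x0 * δ ^ 2 * Real.cos (δ / 2) +
        4 * y0 * γ * δ) / (4 * δ * Real.cos (δ / 2)) : ℝ) : EReal)
  else ⊤

/-- The Legendre–Fenchel transform `Λ*(x₀,y₀,x₁,y₁) = sup_{(δ,γ)} [x₁δ + y₁γ − Λ(δ,γ)]`. -/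
noncomputable def LamStar (x0 y0 x1 y1 : ℝ) : EReal :=
  ⨆ p : ℝ × ℝ, (((x1 * p.1 + y1 * p.2 : ℝ) : EReal) - Lam x0 y0 p.1 p.2)

open Real Filter Topology

lemma le_pi_mul_sin_half {t : ℝ} (ht₀ : 0 ≤ t) (ht : t ≤ π) : t ≤ π * sin (t / 2) := by
  have h := mul_le_sin (x := t / 2) (by linarith) (by linarith)
  rw [div_mul_div_comm, div_le_iff₀ (by positivity)] at h
  linarith

lemma two_mul_cos_half_le {t : ℝ} (ht : t ≤ π) : 2 * cos (t / 2) ≤ π - t := by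
  have h := sin_le (x := π / 2 - t / 2) (by linarith)
  rw [sin_pi_div_two_sub] at h
  linarith

lemma mul_add_mul_div_sin_half_le {A c d t : ℝ} (hc : 0 ≤ c) (hd : 0 ≤ d)
    (hA : π * c / 2 + d ≤ A) (ht₀ : 0 < t) (ht : t < π) :
    A * t + t * (c * cos (t / 2) - d) / sin (t / 2) ≤ π * (A - d) := by
  have hs : 0 < sin (t / 2) := sin_pos_of_pos_of_lt_pi (by linarith) (by linarith)
  have hsin := le_pi_mul_sin_half ht₀.le ht.le
  have hcos := two_mul_cos_half_le ht.le
  have hck : t * cos (t / 2) ≤ π / 2 * sin (t / 2) * (π - t) := by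
    nlinarith [mul_le_mul_of_nonneg_left hcos ht₀.le,
      mul_le_mul_of_nonneg_right hsin (sub_nonneg.2 ht.le)]
  refine le_of_mul_le_mul_right ?_ hs
  rw [add_mul, div_mul_cancel₀ _ hs.ne']
  -- with `s = sin (t / 2)`, `k = cos (t / 2)`: `π (A - d) s - A t s - t (c k - d)`
  -- `= c (π s (π - t) / 2 - t k) + t d (1 - s) + (A - π c / 2 - d) s (π - t)`
  nlinarith [mul_nonneg hc (sub_nonneg.2 hck),
    mul_nonneg (mul_nonneg ht₀.le hd) (sub_nonneg.2 (sin_le_one (t / 2))),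
    mul_nonneg (sub_nonneg.2 hA) (mul_nonneg hs.le (sub_nonneg.2 ht.le))]

lemma abs_mul_div_sin_half (c d δ : ℝ) :
    |δ| * (c * cos (|δ| / 2) - d) / sin (|δ| / 2) = δ * (c * cos (δ / 2) - d) / sin (δ / 2) := by
  rcases abs_cases δ with ⟨h, -⟩ | ⟨h, -⟩
  · rw [h]
  · rw [h, neg_div, cos_neg, sin_neg, neg_mul, neg_div_neg_eq]

lemma cos_half_pos {δ : ℝ} (hδ : |δ| < π) : 0 < cos (δ / 2) := by
  rw [abs_lt] at hδ
  exact cos_pos_of_mem_Ioo ⟨by linarith, by linarith⟩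

lemma mul_sin_half_pos {δ : ℝ} (hδ₀ : δ ≠ 0) (hδ : |δ| < π) : 0 < δ * sin (δ / 2) := by
  rw [abs_lt] at hδ
  rcases hδ₀.lt_or_gt with hneg | hpos
  · exact mul_pos_of_neg_of_neg hneg (sin_neg_of_neg_of_neg_pi_lt (by linarith) (by linarith))
  · exact mul_pos hpos (sin_pos_of_pos_of_lt_pi (by linarith) (by linarith))

lemma coe_sub_Lam_of_ne_zero {x0 y0 x1 y1 δ : ℝ} (γ : ℝ) (hδ₀ : δ ≠ 0) (hδ : |δ| < π) :
    ((x1 * δ + y1 * γ : ℝ) : EReal) - Lam x0 y0 δ γ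
      = (((x1 - x0) * δ + δ * ((y1 ^ 2 + y0 ^ 2) * cos (δ / 2) - 2 * y1 * y0) / sin (δ / 2)
          - δ * sin (δ / 2) / (4 * δ ^ 2 * cos (δ / 2)) *
            (γ - 2 * δ * (y1 * cos (δ / 2) - y0) / sin (δ / 2)) ^ 2 : ℝ) : EReal) := by
  have hs : sin (δ / 2) ≠ 0 := right_ne_zero_of_mul (mul_sin_half_pos hδ₀ hδ).ne'
  have hc : cos (δ / 2) ≠ 0 := (cos_half_pos hδ).ne'
  rw [Lam, if_pos hδ, if_neg hδ₀, ← EReal.coe_sub, EReal.coe_eq_coe_iff]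
  field_simp
  linear_combination -4 * δ ^ 2 * y0 ^ 2 * sin_sq_add_cos_sq (δ / 2)

lemma coe_sub_Lam_le {x0 y0 x1 y1 : ℝ} (hy0 : 0 ≤ y0) (hy1 : 0 ≤ y1)
    (hfar : 1 / 2 * (π * (y1 ^ 2 + y0 ^ 2) + 4 * y1 * y0) ≤ |x1 - x0|) (δ γ : ℝ) :
    ((x1 * δ + y1 * γ : ℝ) : EReal) - Lam x0 y0 δ γ
      ≤ ((π * (|x1 - x0| - 2 * y1 * y0) : ℝ) : EReal) := by
  have hA : π * (y1 ^ 2 + y0 ^ 2) / 2 + 2 * y1 * y0 ≤ |x1 - x0| := by linarith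
  rcases le_or_gt π |δ| with hπδ | hδ
  · rw [Lam, if_neg hπδ.not_gt, EReal.sub_top]
    exact bot_le
  rcases eq_or_ne δ 0 with rfl | hδ₀
  · rw [Lam, if_pos hδ, if_pos rfl, ← EReal.coe_sub, EReal.coe_le_coe_iff, mul_zero, zero_add]
    have hπ : 4 ≤ π * π := by nlinarith [pi_gt_three]
    calc y1 * γ - (γ ^ 2 / 8 + y0 * γ) ≤ 2 * (y1 - y0) ^ 2 := by
          nlinarith [sq_nonneg (γ - 4 * (y1 - y0))]
      _ ≤ π * (π * (y1 ^ 2 + y0 ^ 2) / 2) := by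
          nlinarith [mul_le_mul_of_nonneg_right hπ (by positivity : 0 ≤ y1 ^ 2 + y0 ^ 2),
            mul_nonneg hy0 hy1]
      _ ≤ π * (|x1 - x0| - 2 * y1 * y0) := by gcongr; linarith
  · rw [coe_sub_Lam_of_ne_zero γ hδ₀ hδ, EReal.coe_le_coe_iff]
    have hsq : 0 ≤ δ * sin (δ / 2) / (4 * δ ^ 2 * cos (δ / 2)) *
        (γ - 2 * δ * (y1 * cos (δ / 2) - y0) / sin (δ / 2)) ^ 2 :=
      mul_nonneg (div_nonneg (mul_sin_half_pos hδ₀ hδ).le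
        (mul_nonneg (by positivity) (cos_half_pos hδ).le)) (sq_nonneg _)
    have hlin : (x1 - x0) * δ ≤ |x1 - x0| * |δ| := abs_mul (x1 - x0) δ ▸ le_abs_self _
    have hbound := mul_add_mul_div_sin_half_le (by positivity) (by positivity) hA
      (abs_pos.2 hδ₀) hδ
    rw [abs_mul_div_sin_half] at hbound
    linarith

lemma coe_le_LamStar {x0 y0 x1 y1 t : ℝ} (ht₀ : 0 < t) (ht : t < π) :
    ((|x1 - x0| * t + t * ((y1 ^ 2 + y0 ^ 2) * cos (t / 2) - 2 * y1 * y0) / sin (t / 2) : ℝ) :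
      EReal) ≤ LamStar x0 y0 x1 y1 := by
  obtain ⟨δ, rfl, hlin⟩ : ∃ δ, |δ| = t ∧ (x1 - x0) * δ = |x1 - x0| * t := by
    rcases le_total 0 (x1 - x0) with h | h
    · exact ⟨t, abs_of_pos ht₀, by rw [abs_of_nonneg h]⟩
    · exact ⟨-t, by rw [abs_neg, abs_of_pos ht₀], by rw [abs_of_nonpos h]; ring⟩
  have hδ₀ : δ ≠ 0 := abs_pos.1 ht₀
  let γ := 2 * δ * (y1 * cos (δ / 2) - y0) / sin (δ / 2)
  calc _ = ((x1 * δ + y1 * γ : ℝ) : EReal) - Lam x0 y0 δ γ := by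
        rw [coe_sub_Lam_of_ne_zero γ hδ₀ ht, abs_mul_div_sin_half, hlin, sub_self,
          zero_pow two_ne_zero, mul_zero, sub_zero]
    _ ≤ LamStar x0 y0 x1 y1 := le_iSup (fun p : ℝ × ℝ ↦
        ((x1 * p.1 + y1 * p.2 : ℝ) : EReal) - Lam x0 y0 p.1 p.2) (δ, γ)

lemma tendsto_mul_add_mul_div_sin_half (A c d : ℝ) :
    Tendsto (fun t ↦ A * t + t * (c * cos (t / 2) - d) / sin (t / 2)) (𝓝[<] π)
      (𝓝 (π * (A - d))) := by
  have hcont : ContinuousAt (fun t ↦ A * t + t * (c * cos (t / 2) - d) / sin (t / 2)) π := by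
    fun_prop (disch := simp)
  convert hcont.tendsto.mono_left nhdsWithin_le_nhds using 2
  rw [cos_pi_div_two, sin_pi_div_two]
  ring

theorem legendre_transform_far_regime_general (x0 x1 y0 y1 : ℝ)
    (hy0 : 0 ≤ y0) (hy1 : 0 ≤ y1)
    (hfar : 1 / 2 * (Real.pi * (y1 ^ 2 + y0 ^ 2) + 4 * y1 * y0) < |x1 - x0|) :
    LamStar x0 y0 x1 y1 = ((Real.pi * (|x1 - x0| - 2 * y1 * y0) : ℝ) : EReal) := by
  refine le_antisymm (iSup_le fun p ↦ coe_sub_Lam_le hy0 hy1 hfar.le p.1 p.2) ?_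
  refine le_of_tendsto (EReal.tendsto_coe.2
    (tendsto_mul_add_mul_div_sin_half |x1 - x0| (y1 ^ 2 + y0 ^ 2) (2 * y1 * y0))) ?_
  filter_upwards [Ioo_mem_nhdsLT pi_pos] with t ht
  exact coe_le_LamStar ht.1 ht.2

/-- Theorem: in the far δ-regime, `Λ*(x₀,y₀,x₁,y₁) = π(|x₁ − x₀| − 2y₁y₀)`. -/
theorem legendre_transform_far_regime (x0 x1 y0 y1 : ℝ)
    (hy0 : 0 ≤ y0) (hy1 : 0 ≤ y1) (hy : ¬(y0 = 0 ∧ y1 = 0))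
    (hfar : 1 / 2 * (Real.pi * (y1 ^ 2 + y0 ^ 2) + 4 * y1 * y0) < |x1 - x0|) :
    LamStar x0 y0 x1 y1 = ((Real.pi * (|x1 - x0| - 2 * y1 * y0) : ℝ) : EReal) :=
  legendre_transform_far_regime_general x0 x1 y0 y1 hy0 hy1 hfar
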